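/- arXiv:1210.4774 — 4 statements merged into one kernel-verified Lean document; each statement's English description precedes it below -/
import Mathlib

section
/- Let H be a real symmetric matrix on a finite index set with nonpositive off-diagonal entries and connected nonzero pattern. If v is an eigenvector of H with all entries strictly positive and eigenvalue E, then E is the smallest eigenvalue of H. -/
/-!
Compare an eigenvector `u` having a positive entry with the positive eigenvector `v`: at an index
`i` maximising `u j / v j`, with `c` the maximal ratio, the vector `c • v - u` is nonnegative and
vanishes at `i`. Since the off-diagonal entries of `H` are nonpositive, `(H (c • v - u)) i ≤ 0`,
i.e. `(E - μ) * u i ≤ 0` with `u i > 0`. An arbitrary nonzero eigenvector, or its negative, has a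
positive entry.
-/

open Matrix

section

variable {S 𝕜 : Type*} [Fintype S] [Field 𝕜] [LinearOrder 𝕜] [IsStrictOrderedRing 𝕜]

theorem Matrix.mulVec_apply_nonpos_of_offDiag_nonpos {H : Matrix S S 𝕜}
    (hoff : ∀ i j, i ≠ j → H i j ≤ 0) {w : S → 𝕜} (hw : 0 ≤ w) {i : S} (hwi : w i = 0) :
    (H *ᵥ w) i ≤ 0 := by
  refine Finset.sum_nonpos fun j _ => ?_
  rcases eq_or_ne i j with rfl | hij
  · simp [hwi]
  · exact mul_nonpos_of_nonpos_of_nonneg (hoff i j hij) (hw j)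

theorem Matrix.le_eigenvalue_of_pos_eigenvector_of_exists_pos {H : Matrix S S 𝕜}
    (hoff : ∀ i j, i ≠ j → H i j ≤ 0) {v : S → 𝕜} (hv : ∀ i, 0 < v i) {E : 𝕜}
    (heig : H *ᵥ v = E • v) {μ : 𝕜} {u : S → 𝕜} (hu : H *ᵥ u = μ • u) (hpos : ∃ j, 0 < u j) :
    E ≤ μ := by
  obtain ⟨j₀, hj₀⟩ := hpos
  have : Nonempty S := ⟨j₀⟩
  obtain ⟨i, hmax⟩ := Finite.exists_max fun j => u j / v j
  set c := u i / v i
  have hc : 0 < c := (div_pos hj₀ (hv j₀)).trans_le (hmax j₀)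
  have hui : u i = c * v i := (div_mul_cancel₀ _ (hv i).ne').symm
  have hw : 0 ≤ c • v - u := fun j => sub_nonneg.2 ((div_le_iff₀ (hv j)).1 (hmax j))
  have hwi : (c • v - u) i = 0 := by simp [hui]
  have hHw := mulVec_apply_nonpos_of_offDiag_nonpos hoff hw hwi
  rw [mulVec_sub, mulVec_smul, heig, hu] at hHw
  simp only [Pi.sub_apply, Pi.smul_apply, smul_eq_mul, hui] at hHw
  nlinarith [mul_pos hc (hv i)]

end

theorem positive_eigenvector_is_ground_state_general
    {S : Type*} [Fintype S]
    (H : Matrix S S ℝ)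
    (hoff : ∀ i j, i ≠ j → H i j ≤ 0)
    (v : S → ℝ) (hv : ∀ i, 0 < v i) (E : ℝ)
    (heig : H.mulVec v = E • v) :
    ∀ (μ : ℝ) (u : S → ℝ), u ≠ 0 → H.mulVec u = μ • u → E ≤ μ := by
  intro μ u hu₀ hu
  obtain ⟨j, hj⟩ := Function.ne_iff.mp hu₀
  rcases hj.lt_or_gt with hneg | hpos
  · have hu' : H *ᵥ -u = μ • -u := by rw [mulVec_neg, hu, smul_neg]
    exact H.le_eigenvalue_of_pos_eigenvector_of_exists_pos hoff hv heig hu'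
      ⟨j, by simpa using hneg⟩
  · exact H.le_eigenvalue_of_pos_eigenvector_of_exists_pos hoff hv heig hu ⟨j, hpos⟩

/-- If a real symmetric matrix with nonpositive off-diagonal entries and
connected nonzero pattern has an eigenvector with all entries strictly
positive, then the corresponding eigenvalue is the smallest eigenvalue. -/
theorem positive_eigenvector_is_ground_state
    {S : Type*} [Fintype S] [DecidableEq S] [Nonempty S]
    (H : Matrix S S ℝ) (hsym : H.IsSymm)
    (hoff : ∀ i j, i ≠ j → H i j ≤ 0)
    (hconn : ∀ i j : S,
      Relation.ReflTransGen (fun a b => a ≠ b ∧ H a b ≠ 0) i j)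
    (v : S → ℝ) (hv : ∀ i, 0 < v i) (E : ℝ)
    (heig : H.mulVec v = E • v) :
    ∀ (μ : ℝ) (u : S → ℝ), u ≠ 0 → H.mulVec u = μ • u → E ≤ μ :=
  positive_eigenvector_is_ground_state_general H hoff v hv E heig
end

section
/- Let H be a real symmetric matrix on a finite set S with nonpositive off-diagonal entries whose nonzero pattern graph is connected. If u and v are both vectors with all entries strictly positive and both are eigenvectors of H, then u and v are proportional (they have the same eigenvalue, the ground-state eigenvalue). -/
/-!
Symmetry of `H` forces two eigenvectors that are not orthogonal, as positive vectors are not,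
to share their eigenvalue. Subtracting from `u` the largest multiple `c • v` that stays below it
gives a nonnegative eigenvector `w` vanishing somewhere. Since the off-diagonal entries of `H` are
nonpositive, the equation `(H *ᵥ w) b = 0` at a zero `b` of `w` is a sum of nonpositive terms,
so `w` also vanishes at every neighbour of `b`; by connectedness `w = 0`, i.e. `u = c • v`.
-/

open Matrix

namespace Matrix

variable {n R : Type*} [Fintype n]

theorem IsSymm.eigenvalue_eq_of_dotProduct_ne_zero [CommRing R] [IsDomain R]
    {H : Matrix n n R} (hH : H.IsSymm) {u v : n → R} {a b : R}
    (hu : H *ᵥ u = a • u) (hv : H *ᵥ v = b • v) (huv : u ⬝ᵥ v ≠ 0) : a = b := by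
  have hcomm : u ⬝ᵥ H *ᵥ v = H *ᵥ u ⬝ᵥ v := by
    rw [dotProduct_mulVec, ← mulVec_transpose, hH.eq]
  rw [hu, hv, dotProduct_smul, smul_dotProduct, smul_eq_mul, smul_eq_mul] at hcomm
  exact (mul_right_cancel₀ huv hcomm).symm

variable [Field R] [LinearOrder R] [IsStrictOrderedRing R]

theorem exists_smul_le_of_pos [Nonempty n] (u : n → R) {v : n → R} (hv : ∀ i, 0 < v i) :
    ∃ (c : R) (k : n), c • v ≤ u ∧ c * v k = u k := by
  obtain ⟨k, hk⟩ := Finite.exists_min fun i => u i / v i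
  refine ⟨u k / v k, k, fun i => ?_, div_mul_cancel₀ _ (hv k).ne'⟩
  exact (le_div_iff₀ (hv i)).mp (hk i)

variable {H : Matrix n n R} {w : n → R}

theorem apply_eq_zero_of_mulVec_apply_nonneg (hoff : ∀ i j, i ≠ j → H i j ≤ 0)
    (hw : 0 ≤ w) {b c : n} (hb : w b = 0) (hHw : 0 ≤ (H *ᵥ w) b) (hH : H b c ≠ 0) :
    w c = 0 := by
  have hterm : ∀ j, H b j * w j ≤ 0 := fun j => by
    rcases eq_or_ne b j with rfl | hj
    · simp [hb]
    · exact mul_nonpos_of_nonpos_of_nonneg (hoff b j hj) (hw j)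
  have hsum : ∑ j, H b j * w j = 0 :=
    le_antisymm (Finset.sum_nonpos fun j _ => hterm j) hHw
  have hzero := (Finset.sum_eq_zero_iff_of_nonpos fun j _ => hterm j).mp hsum c
    (Finset.mem_univ c)
  exact (mul_eq_zero.mp hzero).resolve_left hH

theorem eq_zero_of_nonneg_of_mulVec_eq_smul (hoff : ∀ i j, i ≠ j → H i j ≤ 0)
    (hconn : ∀ i j : n, Relation.ReflTransGen (fun a b => H a b ≠ 0) i j)
    {E : R} (hw : 0 ≤ w) (hHw : H *ᵥ w = E • w) {k : n} (hk : w k = 0) : w = 0 := by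
  funext i
  induction hconn k i with
  | refl => exact hk
  | tail _ hab ih =>
    refine apply_eq_zero_of_mulVec_apply_nonneg hoff hw ih ?_ hab
    simp [hHw, ih]

end Matrix

theorem positive_eigenvectors_proportional_general
    {S : Type*} [Fintype S] [Nonempty S]
    (H : Matrix S S ℝ) (hsym : H.IsSymm)
    (hoff : ∀ i j, i ≠ j → H i j ≤ 0)
    (hconn : ∀ i j : S,
      Relation.ReflTransGen (fun a b => a ≠ b ∧ H a b ≠ 0) i j)
    (u v : S → ℝ) (hu : ∀ i, 0 < u i) (hv : ∀ i, 0 < v i)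
    (Eu Ev : ℝ)
    (hequ : H.mulVec u = Eu • u) (heqv : H.mulVec v = Ev • v) :
    Eu = Ev ∧ ∃ c : ℝ, u = c • v := by
  have hE : Eu = Ev := hsym.eigenvalue_eq_of_dotProduct_ne_zero hequ heqv
    (Finset.sum_pos (fun i _ => mul_pos (hu i) (hv i)) Finset.univ_nonempty).ne'
  obtain ⟨c, k, hle, hk⟩ := exists_smul_le_of_pos u hv
  have hw : H *ᵥ (u - c • v) = Eu • (u - c • v) := by
    rw [mulVec_sub, mulVec_smul, hequ, heqv, hE, smul_sub, smul_comm]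
  have hconn' i j : Relation.ReflTransGen (fun a b => H a b ≠ 0) i j :=
    Relation.ReflTransGen.mono (fun _ _ h => h.2) i j (hconn i j)
  have hzero := eq_zero_of_nonneg_of_mulVec_eq_smul (k := k) hoff hconn' (sub_nonneg.mpr hle) hw
    (by simp [hk])
  exact ⟨hE, c, sub_eq_zero.mp hzero⟩

/-- For a real symmetric matrix with nonpositive off-diagonal entries and
connected nonzero pattern, any two eigenvectors with all entries strictly
positive have the same eigenvalue (the ground-state eigenvalue) and are
proportional. -/
theorem positive_eigenvectors_proportional
    {S : Type*} [Fintype S] [DecidableEq S] [Nonempty S]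
    (H : Matrix S S ℝ) (hsym : H.IsSymm)
    (hoff : ∀ i j, i ≠ j → H i j ≤ 0)
    (hconn : ∀ i j : S,
      Relation.ReflTransGen (fun a b => a ≠ b ∧ H a b ≠ 0) i j)
    (u v : S → ℝ) (hu : ∀ i, 0 < u i) (hv : ∀ i, 0 < v i)
    (Eu Ev : ℝ)
    (hequ : H.mulVec u = Eu • u) (heqv : H.mulVec v = Ev • v) :
    Eu = Ev ∧ ∃ c : ℝ, u = c • v :=
  positive_eigenvectors_proportional_general H hsym hoff hconn u v hu hv Eu Ev hequ heqv
end

section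
/- Variational comparison lemma: Let H act on ℓ²(X × A) (X = hole positions, A = flavor configurations) with matrix elements ⟨(y,a')|H|(x,a)⟩ = −t_{x,y} δ_{a', a_{y→x}} for x ≠ y (with t_{x,y} ≥ 0 and a ↦ a_{y→x} a bijection A → A for each bond) plus diagonal terms ⟨(x,a)|H|(x,a)⟩ = V(x) depending only on x. If Ψ = Σ ψ(x,a) |x,a⟩ is any normalized vector and Φ = Σ_x φ(x)|x, a₀⟩ with φ(x) = (Σ_a ψ(x,a)²)^{1/2} for a fixed a₀ fixed by all maps a ↦ a_{y→x}, then ⟨Φ, HΦ⟩ ≤ ⟨Ψ, HΨ⟩ and ⟨Φ,Φ⟩ = ⟨Ψ,Ψ⟩. -/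
/-! The off-diagonal matrix elements of `H` are nonpositive and only permute flavors, so by
Cauchy–Schwarz the hopping overlap of `ψ` between hole positions `x` and `y` is at most
`φ(y) φ(x)`, which is exactly the hopping overlap of `Φ` because `a₀` is fixed by every move.
The diagonal part only sees the fibre norms `φ(x)²`, which `Φ` and `ψ` share. -/

open Finset

variable {X A : Type*}

/-- The quadratic form (energy) of the infinite-`U` one-hole Hamiltonian on
`ℓ²(X × A)`: off-diagonal matrix elements `⟨(y,a')|H|(x,a)⟩ = −t_{x,y}` when
`a' = move x y a` (the flavor configuration with the flavor at `y` moved to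
`x`), and diagonal elements `V(x)` depending only on the hole position. -/
def nagaokaEnergy [Fintype X] [Fintype A]
    (t : X → X → ℝ) (V : X → ℝ) (move : X → X → A ≃ A)
    (ψ : X → A → ℝ) : ℝ :=
  (∑ x : X, ∑ y : X, (-(t x y)) * ∑ a : A, ψ y (move x y a) * ψ x a)
    + ∑ x : X, V x * ∑ a : A, ψ x a ^ 2

section Flavors

variable [Fintype A]

theorem sum_comp_equiv_mul_le_sqrt_mul_sqrt (e : A ≃ A) (f g : A → ℝ) :
    ∑ a, f (e a) * g a ≤ √(∑ a, f a ^ 2) * √(∑ a, g a ^ 2) := by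
  have hperm : ∑ a, f (e a) ^ 2 = ∑ a, f a ^ 2 := e.sum_comp (f · ^ 2)
  simpa only [hperm] using Real.sum_mul_le_sqrt_mul_sqrt univ (fun a => f (e a)) g

variable [DecidableEq A]

theorem sum_ite_sqrt_sq {s : ℝ} (hs : 0 ≤ s) (a₀ : A) :
    ∑ a : A, (if a = a₀ then √s else 0) ^ 2 = s := by
  simp [ite_pow, Real.sq_sqrt hs]

theorem sum_ite_comp_equiv_mul_ite (e : A ≃ A) {a₀ : A} (he : e a₀ = a₀) (u v : ℝ) :
    ∑ a : A, (if e a = a₀ then u else 0) * (if a = a₀ then v else 0) = u * v := by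
  have hiff : ∀ a, e a = a₀ ↔ a = a₀ := fun a =>
    ⟨fun h => e.injective (h.trans he.symm), fun h => h ▸ he⟩
  simp [hiff, ← ite_and]

end Flavors

theorem nagaokaEnergy_le_of_sum_sq_eq_of_hopping_le [Fintype X] [Fintype A]
    {t : X → X → ℝ} (htnn : ∀ x y, 0 ≤ t x y) (V : X → ℝ) (move : X → X → A ≃ A)
    {φ ψ : X → A → ℝ} (hnorm : ∀ x, ∑ a, φ x a ^ 2 = ∑ a, ψ x a ^ 2)
    (hhop : ∀ x y, ∑ a, ψ y (move x y a) * ψ x a ≤ ∑ a, φ y (move x y a) * φ x a) :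
    nagaokaEnergy t V move φ ≤ nagaokaEnergy t V move ψ := by
  unfold nagaokaEnergy
  simp only [hnorm]
  gcongr (∑ x, ∑ y, ?_) + _ with x _ y _
  exact mul_le_mul_of_nonpos_left (hhop x y) (neg_nonpos.2 (htnn x y))

theorem nagaoka_variational_comparison_general
    [Fintype X] [Fintype A] [DecidableEq A]
    (t : X → X → ℝ) (V : X → ℝ) (move : X → X → A ≃ A)
    (htnn : ∀ x y, 0 ≤ t x y)
    (a₀ : A) (hfix : ∀ x y, move x y a₀ = a₀)
    (ψ : X → A → ℝ)
    (Φ : X → A → ℝ)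
    (hΦ : ∀ x a, Φ x a = if a = a₀ then Real.sqrt (∑ b : A, ψ x b ^ 2) else 0) :
    (∑ x : X, ∑ a : A, Φ x a ^ 2) = (∑ x : X, ∑ a : A, ψ x a ^ 2) ∧
    nagaokaEnergy t V move Φ ≤ nagaokaEnergy t V move ψ := by
  have hnorm : ∀ x, ∑ a, Φ x a ^ 2 = ∑ a, ψ x a ^ 2 := fun x => by
    simp only [hΦ]
    exact sum_ite_sqrt_sq (by positivity) a₀
  refine ⟨sum_congr rfl fun x _ => hnorm x,
    nagaokaEnergy_le_of_sum_sq_eq_of_hopping_le htnn V move hnorm fun x y => ?_⟩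
  simp only [hΦ, sum_ite_comp_equiv_mul_ite (move x y) (hfix x y)]
  exact sum_comp_equiv_mul_le_sqrt_mul_sqrt (move x y) (ψ y) (ψ x)

/-- Variational comparison lemma: replacing a normalized state `ψ` by the
state `Φ` concentrated on the fixed flavor configuration `a₀`, with amplitudes
`φ(x) = (Σ_a ψ(x,a)²)^{1/2}`, preserves the norm and does not increase the
energy. -/
theorem nagaoka_variational_comparison
    [Fintype X] [Fintype A] [DecidableEq A]
    (t : X → X → ℝ) (V : X → ℝ) (move : X → X → A ≃ A)
    (ht0 : ∀ x, t x x = 0)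
    (htnn : ∀ x y, 0 ≤ t x y)
    (htsym : ∀ x y, t x y = t y x)
    (a₀ : A) (hfix : ∀ x y, move x y a₀ = a₀)
    (ψ : X → A → ℝ)
    (Φ : X → A → ℝ)
    (hΦ : ∀ x a, Φ x a = if a = a₀ then Real.sqrt (∑ b : A, ψ x b ^ 2) else 0) :
    (∑ x : X, ∑ a : A, Φ x a ^ 2) = (∑ x : X, ∑ a : A, ψ x a ^ 2) ∧
    nagaokaEnergy t V move Φ ≤ nagaokaEnergy t V move ψ :=
  nagaoka_variational_comparison_general t V move htnn a₀ hfix ψ Φ hΦ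
end

section
/- Generalized Nagaoka theorem (existence): For the SU(n) infinite-U Hubbard model on a finite lattice Λ with one hole (N_f = |Λ| − 1), hopping amplitudes t_{x,y} = t_{y,x} ≥ 0, and arbitrary density–density interaction V({n_x}), the minimum of the energy over the whole one-hole Hilbert space is attained in the fully polarized sector where all fermions carry flavor 1. -/
open Finset

/-- A flavor configuration with a hole at `x`: an assignment of one of `n`
flavors to every site of `Λ` other than `x`. -/
abbrev HoleConf (Λ : Type*) (n : ℕ) (x : Λ) := {z : Λ // z ≠ x} → Fin n

/-- Moving the hole from `x` to `y`: the flavor at `y` is transferred to `x`,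
all other flavors are unchanged, and the hole is now at `y`. -/
def moveConf {Λ : Type*} [DecidableEq Λ] {n : ℕ} (x y : Λ) (hxy : x ≠ y)
    (α : HoleConf Λ n x) : HoleConf Λ n y :=
  fun z => if h : (z : Λ) = x then α ⟨y, Ne.symm hxy⟩ else α ⟨z, h⟩

/-- The quadratic form of the infinite-`U` SU(n) Hubbard Hamiltonian with one
hole in the basis `Ψ_{(x,α)}`: off-diagonal matrix elements
`⟨Ψ_{(y,α_{y→x})}|H|Ψ_{(x,α)}⟩ = −t_{x,y}` and diagonal elements `V x`
(the value of the density–density interaction, which depends only on the hole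
position). -/
def suNEnergy {Λ : Type*} [Fintype Λ] [DecidableEq Λ] (n : ℕ)
    (t : Λ → Λ → ℝ) (V : Λ → ℝ)
    (ψ : (x : Λ) → HoleConf Λ n x → ℝ) : ℝ :=
  (∑ x : Λ, ∑ y : Λ,
    if h : x = y then 0
    else (-(t x y)) * ∑ α : HoleConf Λ n x, ψ y (moveConf x y h α) * ψ x α)
  + ∑ x : Λ, V x * ∑ α : HoleConf Λ n x, ψ x α ^ 2

/-!
Replace a one-hole state `ψ` by the fully polarized state whose amplitude at hole position `x`
is the norm of the flavor vector `ψ x`. This keeps the norm and the diagonal energy. Since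
moving the hole permutes flavor configurations, Cauchy–Schwarz bounds each hopping amplitude
`∑ α, ψ y (α_{y→x}) ψ x α` by the product of the two norms, and with `t ≥ 0` the hopping energy
can only decrease. So every energy is bounded below by a polarized one.
-/

section

variable {Λ : Type*} [DecidableEq Λ] {n : ℕ}

theorem moveConf_moveConf (x y : Λ) (h : x ≠ y) (α : HoleConf Λ n x) :
    moveConf y x h.symm (moveConf x y h α) = α := by
  funext ⟨z, hz⟩
  by_cases hzy : z = y
  · subst hzy
    simp [moveConf]
  · simp [moveConf, hzy, hz]

theorem moveConf_bijective (x y : Λ) (h : x ≠ y) :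
    Function.Bijective (moveConf (n := n) x y h) :=
  Function.bijective_iff_has_inverse.mpr
    ⟨moveConf y x h.symm, moveConf_moveConf x y h, moveConf_moveConf y x h.symm⟩

theorem moveConf_eq_zero_iff [NeZero n] (x y : Λ) (h : x ≠ y) (α : HoleConf Λ n x) :
    (∀ z, moveConf x y h α z = 0) ↔ ∀ z, α z = 0 := by
  constructor
  · rintro hmove ⟨z, hz⟩
    by_cases hzy : z = y
    · subst hzy
      simpa [moveConf] using hmove ⟨x, h⟩
    · simpa [moveConf, hz] using hmove ⟨z, hzy⟩
  · rintro hα ⟨z, -⟩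
    simp only [moveConf]
    split_ifs <;> exact hα _

variable [Fintype Λ]

theorem sum_moveConf (x y : Λ) (h : x ≠ y) (f : HoleConf Λ n y → ℝ) :
    ∑ α : HoleConf Λ n x, f (moveConf x y h α) = ∑ β : HoleConf Λ n y, f β :=
  Fintype.sum_bijective _ (moveConf_bijective x y h) _ _ fun _ => rfl

def polarizedState [NeZero n] (φ : Λ → ℝ) : (x : Λ) → HoleConf Λ n x → ℝ :=
  fun x α => if ∀ z, α z = 0 then φ x else 0

theorem sum_polarizedState_sq [NeZero n] (φ : Λ → ℝ) (x : Λ) :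
    ∑ α : HoleConf Λ n x, polarizedState φ x α ^ 2 = φ x ^ 2 := by
  rw [Fintype.sum_eq_single (fun _ => 0)]
  · simp [polarizedState]
  · intro α hα
    simp [polarizedState, ← funext_iff, hα]

theorem sum_polarizedState_moveConf_mul [NeZero n] (φ : Λ → ℝ) (x y : Λ) (h : x ≠ y) :
    ∑ α : HoleConf Λ n x, polarizedState φ y (moveConf x y h α) * polarizedState φ x α
      = φ y * φ x := by
  rw [Fintype.sum_eq_single (fun _ => 0)]
  · have hmove : ∀ z, moveConf x y h (fun _ => (0 : Fin n)) z = 0 :=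
      (moveConf_eq_zero_iff x y h _).mpr fun _ => rfl
    simp [polarizedState, hmove]
  · intro α hα
    simp [polarizedState, ← funext_iff, hα]

noncomputable def siteNorm (ψ : (x : Λ) → HoleConf Λ n x → ℝ) (x : Λ) : ℝ :=
  √(∑ α : HoleConf Λ n x, ψ x α ^ 2)

theorem siteNorm_sq (ψ : (x : Λ) → HoleConf Λ n x → ℝ) (x : Λ) :
    siteNorm ψ x ^ 2 = ∑ α : HoleConf Λ n x, ψ x α ^ 2 :=
  Real.sq_sqrt (sum_nonneg fun _ _ => sq_nonneg _)

theorem sum_moveConf_mul_le_siteNorm (ψ : (x : Λ) → HoleConf Λ n x → ℝ) (x y : Λ)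
    (h : x ≠ y) :
    ∑ α : HoleConf Λ n x, ψ y (moveConf x y h α) * ψ x α ≤ siteNorm ψ y * siteNorm ψ x := by
  calc ∑ α : HoleConf Λ n x, ψ y (moveConf x y h α) * ψ x α
      ≤ √(∑ α : HoleConf Λ n x, ψ y (moveConf x y h α) ^ 2) *
          √(∑ α : HoleConf Λ n x, ψ x α ^ 2) := Real.sum_mul_le_sqrt_mul_sqrt _ _ _
    _ = siteNorm ψ y * siteNorm ψ x := by
      rw [sum_moveConf x y h fun β => ψ y β ^ 2]
      rfl

theorem sum_sq_polarizedState_siteNorm [NeZero n] (ψ : (x : Λ) → HoleConf Λ n x → ℝ) :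
    ∑ x : Λ, ∑ α : HoleConf Λ n x, polarizedState (siteNorm ψ) x α ^ 2
      = ∑ x : Λ, ∑ α : HoleConf Λ n x, ψ x α ^ 2 := by
  simp only [sum_polarizedState_sq, siteNorm_sq]

theorem suNEnergy_polarizedState_siteNorm_le [NeZero n] (t : Λ → Λ → ℝ) (V : Λ → ℝ)
    (htnn : ∀ x y, 0 ≤ t x y) (ψ : (x : Λ) → HoleConf Λ n x → ℝ) :
    suNEnergy n t V (polarizedState (siteNorm ψ)) ≤ suNEnergy n t V ψ := by
  unfold suNEnergy
  refine add_le_add (sum_le_sum fun x _ => sum_le_sum fun y _ => ?_) (le_of_eq ?_)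
  · split_ifs with h
    · rfl
    · rw [sum_polarizedState_moveConf_mul, neg_mul, neg_mul, neg_le_neg_iff]
      exact mul_le_mul_of_nonneg_left (sum_moveConf_mul_le_siteNorm ψ x y h) (htnn x y)
  · simp only [sum_polarizedState_sq, siteNorm_sq]

end

theorem nagaoka_existence_general {Λ : Type*} [Fintype Λ] [DecidableEq Λ]
    (n : ℕ) [NeZero n]
    (t : Λ → Λ → ℝ) (V : Λ → ℝ)
    (htnn : ∀ x y, 0 ≤ t x y) :
    sInf {e : ℝ | ∃ ψ : (x : Λ) → HoleConf Λ n x → ℝ,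
        (∑ x : Λ, ∑ α : HoleConf Λ n x, ψ x α ^ 2) = 1 ∧ suNEnergy n t V ψ = e}
    = sInf {e : ℝ | ∃ (φ : Λ → ℝ) (ψ : (x : Λ) → HoleConf Λ n x → ℝ),
        (∀ x (α : HoleConf Λ n x),
          ψ x α = if (∀ z, α z = (0 : Fin n)) then φ x else 0) ∧
        (∑ x : Λ, ∑ α : HoleConf Λ n x, ψ x α ^ 2) = 1 ∧ suNEnergy n t V ψ = e} := by
  apply csInf_eq_csInf_of_forall_exists_le
  · rintro e ⟨ψ, hnorm, rfl⟩
    exact ⟨_, ⟨siteNorm ψ, _, fun _ _ => rfl, (sum_sq_polarizedState_siteNorm ψ).trans hnorm,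
      rfl⟩, suNEnergy_polarizedState_siteNorm_le t V htnn ψ⟩
  · rintro e ⟨-, ψ, -, hnorm, rfl⟩
    exact ⟨_, ⟨ψ, hnorm, rfl⟩, le_rfl⟩

/-- Generalized Nagaoka theorem (existence): for the SU(n) infinite-`U`
Hubbard model with one hole, nonnegative symmetric hopping amplitudes and
arbitrary density–density interaction, the minimum of the energy over the
whole one-hole Hilbert space equals the minimum over the fully polarized
sector in which every fermion carries flavor `1` (here the flavor `0 : Fin n`). -/
theorem nagaoka_existence {Λ : Type*} [Fintype Λ] [DecidableEq Λ] [Nonempty Λ]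
    (n : ℕ) [NeZero n]
    (t : Λ → Λ → ℝ) (V : Λ → ℝ)
    (htnn : ∀ x y, 0 ≤ t x y)
    (htsym : ∀ x y, t x y = t y x)
    (ht0 : ∀ x, t x x = 0) :
    sInf {e : ℝ | ∃ ψ : (x : Λ) → HoleConf Λ n x → ℝ,
        (∑ x : Λ, ∑ α : HoleConf Λ n x, ψ x α ^ 2) = 1 ∧ suNEnergy n t V ψ = e}
    = sInf {e : ℝ | ∃ (φ : Λ → ℝ) (ψ : (x : Λ) → HoleConf Λ n x → ℝ),
        (∀ x (α : HoleConf Λ n x),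
          ψ x α = if (∀ z, α z = (0 : Fin n)) then φ x else 0) ∧
        (∑ x : Λ, ∑ α : HoleConf Λ n x, ψ x α ^ 2) = 1 ∧ suNEnergy n t V ψ = e} :=
  nagaoka_existence_general n t V htnn
end
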